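/- Let X ∈ ℝ^{d₁×n₁} satisfy XXᵀ = I_{d₁}, with columns x₁,…,x_{n₁} satisfying ‖xᵢ‖₂² ≤ μ²d₁/n₁ for all i. Let W ∈ ℝ^{d₁×n₂} with ‖W‖₂ ≤ σ₁, and let e_j denote the j-th standard basis vector of ℝ^{n₂}. Then ‖ (1/(n₁n₂)) Σ_{i=1}^{n₁} Σ_{j=1}^{n₂} xᵢxᵢᵀ W e_j e_jᵀ Wᵀ xᵢxᵢᵀ ‖₂ ≤ σ₁² μ² d₁ / (n₁² n₂). -/

import Mathlib

open Matrix
open scoped Matrix.Norms.L2Operator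

lemma sum_single_outer (n : ℕ) :
    ∑ j : Fin n, vecMulVec (Pi.single j (1:ℝ)) (Pi.single j (1:ℝ))
      = (1 : Matrix (Fin n) (Fin n) ℝ) := by
  ext a b
  simp [Matrix.sum_apply, vecMulVec_apply, Pi.single_apply, Matrix.one_apply, ite_and, eq_comm]

lemma outer_mul_outer {d : ℕ} (x : Fin d → ℝ) (B : Matrix (Fin d) (Fin d) ℝ) :
    vecMulVec x x * B * vecMulVec x x = (x ⬝ᵥ (B *ᵥ x)) • vecMulVec x x := by
  ext a b
  simp only [Matrix.mul_apply, vecMulVec_apply, dotProduct, mulVec, Matrix.smul_apply,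
    smul_eq_mul, Finset.sum_mul, Finset.mul_sum]
  rw [Finset.sum_comm]
  refine Finset.sum_congr rfl fun k _ => Finset.sum_congr rfl fun l _ => by ring

lemma sum_smul_outer {d n : ℕ} (X : Matrix (Fin d) (Fin n) ℝ) (c : Fin n → ℝ) :
    ∑ i, c i • vecMulVec (fun a => X a i) (fun a => X a i) = X * Matrix.diagonal c * Xᵀ := by
  ext a b
  simp only [Matrix.sum_apply, Matrix.smul_apply, vecMulVec_apply, smul_eq_mul,
    Matrix.mul_apply, Matrix.diagonal_apply, Matrix.transpose_apply, mul_ite, mul_zero,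
    ite_mul, zero_mul, Finset.sum_ite_eq, Finset.sum_ite_eq', Finset.mem_univ, if_true]
  exact Finset.sum_congr rfl fun i _ => by ring

lemma l2_norm_one_le (d : ℕ) : ‖(1 : Matrix (Fin d) (Fin d) ℝ)‖ ≤ 1 := by
  rw [Matrix.cstar_norm_def, _root_.map_one]
  exact ContinuousLinearMap.norm_id_le

lemma l2_opNorm_diagonal_le {n : ℕ} (c : Fin n → ℝ) (b : ℝ) (hb : 0 ≤ b)
    (h : ∀ i, |c i| ≤ b) : ‖(Matrix.diagonal c : Matrix (Fin n) (Fin n) ℝ)‖ ≤ b := by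
  rw [Matrix.l2_opNorm_def]
  refine ContinuousLinearMap.opNorm_le_bound _ hb fun x => ?_
  have hx : (LinearEquiv.trans Matrix.toEuclideanLin
      LinearMap.toContinuousLinearMap (Matrix.diagonal c)) x
      = (WithLp.equiv 2 (Fin n → ℝ)).symm (Matrix.diagonal c *ᵥ (WithLp.equiv 2 (Fin n → ℝ)) x) :=
    rfl
  rw [hx, EuclideanSpace.norm_eq, EuclideanSpace.norm_eq]
  rw [← Real.sqrt_sq hb, ← Real.sqrt_mul (sq_nonneg b)]
  apply Real.sqrt_le_sqrt
  rw [Finset.mul_sum]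
  refine Finset.sum_le_sum fun i _ => ?_
  simp only [WithLp.equiv_symm_apply, PiLp.toLp_apply, WithLp.equiv_apply, Matrix.mulVec_diagonal, Real.norm_eq_abs, abs_mul,
    mul_pow]
  exact mul_le_mul_of_nonneg_right (pow_le_pow_left₀ (abs_nonneg _) (h i) 2) (sq_nonneg _)

lemma euclid_norm_sq {n : ℕ} (y : Fin n → ℝ) :
    ‖(WithLp.equiv 2 (Fin n → ℝ)).symm y‖ ^ 2 = y ⬝ᵥ y := by
  rw [EuclideanSpace.norm_eq, Real.sq_sqrt (by positivity)]
  simp [dotProduct, sq_abs, sq]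

/-- Variance bound `‖E[Z_{ij}Z_{ij}ᵀ]‖₂ ≤ σ₁²μ²d₁/(n₁²n₂)` for the
measurement operator of multi-label regression with missing labels. -/
theorem multilabel_variance_bound
    (d₁ n₁ n₂ : ℕ) (mu σ₁ : ℝ)
    (X : Matrix (Fin d₁) (Fin n₁) ℝ)
    (hX : X * Xᵀ = 1)
    (hXinc : ∀ i, (fun a => X a i) ⬝ᵥ (fun a => X a i) ≤ mu ^ 2 * d₁ / n₁)
    (W : Matrix (Fin d₁) (Fin n₂) ℝ) (hW : ‖W‖ ≤ σ₁) :
    ‖((n₁ : ℝ) * n₂)⁻¹ • ∑ i : Fin n₁, ∑ j : Fin n₂,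
        vecMulVec (fun a => X a i) (fun a => X a i) * W *
          vecMulVec (Pi.single j (1 : ℝ)) (Pi.single j (1 : ℝ)) * Wᵀ *
          vecMulVec (fun a => X a i) (fun a => X a i)‖
      ≤ σ₁ ^ 2 * mu ^ 2 * d₁ / ((n₁ : ℝ) ^ 2 * n₂) := by
  rcases Nat.eq_zero_or_pos n₂ with hn₂ | hn₂
  · subst hn₂; simp
  rcases Nat.eq_zero_or_pos n₁ with hn₁ | hn₁
  · subst hn₁; simp
  have hσ : 0 ≤ σ₁ := le_trans (norm_nonneg W) hW
  have hn₁' : (0:ℝ) < n₁ := by exact_mod_cast hn₁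
  have hn₂' : (0:ℝ) < n₂ := by exact_mod_cast hn₂
  set c : Fin n₁ → ℝ := fun i => (fun a => X a i) ⬝ᵥ ((W * Wᵀ) *ᵥ fun a => X a i) with hc
  -- bound on μ² d₁ / n₁
  have hb0 : 0 ≤ mu ^ 2 * d₁ / n₁ := by
    refine le_trans ?_ (hXinc ⟨0, hn₁⟩)
    exact Finset.sum_nonneg fun a _ => mul_self_nonneg _
  have hWt : ‖Wᵀ‖ ≤ σ₁ := by
    rw [← Matrix.conjTranspose_eq_transpose_of_trivial, Matrix.l2_opNorm_conjTranspose]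
    exact hW
  -- bound on |c i|
  have hci : ∀ i, |c i| ≤ σ₁ ^ 2 * (mu ^ 2 * d₁ / n₁) := by
    intro i
    have hrw : c i = (Wᵀ *ᵥ fun a => X a i) ⬝ᵥ (Wᵀ *ᵥ fun a => X a i) := by
      simp only [hc]
      rw [← Matrix.mulVec_mulVec, Matrix.dotProduct_mulVec, ← Matrix.mulVec_transpose]
    have hpos : 0 ≤ c i := by
      rw [hrw]; exact Finset.sum_nonneg fun a _ => mul_self_nonneg _
    rw [abs_of_nonneg hpos, hrw, ← euclid_norm_sq]
    have h1 : ‖(WithLp.equiv 2 (Fin n₂ → ℝ)).symm (Wᵀ *ᵥ fun a => X a i)‖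
        ≤ ‖Wᵀ‖ * ‖(WithLp.equiv 2 (Fin d₁ → ℝ)).symm (fun a => X a i)‖ := by
      exact Matrix.l2_opNorm_mulVec Wᵀ ((WithLp.equiv 2 (Fin d₁ → ℝ)).symm (fun a => X a i))
    have h2 : ‖(WithLp.equiv 2 (Fin d₁ → ℝ)).symm (fun a => X a i)‖ ^ 2 ≤ mu ^ 2 * d₁ / n₁ := by
      rw [euclid_norm_sq]; exact hXinc i
    calc ‖(WithLp.equiv 2 (Fin n₂ → ℝ)).symm (Wᵀ *ᵥ fun a => X a i)‖ ^ 2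
        ≤ (‖Wᵀ‖ * ‖(WithLp.equiv 2 (Fin d₁ → ℝ)).symm (fun a => X a i)‖) ^ 2 := by
          exact pow_le_pow_left₀ (norm_nonneg _) h1 2
      _ = ‖Wᵀ‖ ^ 2 * ‖(WithLp.equiv 2 (Fin d₁ → ℝ)).symm (fun a => X a i)‖ ^ 2 := by ring
      _ ≤ σ₁ ^ 2 * (mu ^ 2 * d₁ / n₁) := by
          exact mul_le_mul (pow_le_pow_left₀ (norm_nonneg _) hWt 2) h2 (sq_nonneg _)
            (sq_nonneg _)
  -- norm of X
  have hXt : ‖Xᵀ‖ ≤ 1 := by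
    have h1 : ‖Xᵀ‖ * ‖Xᵀ‖ ≤ 1 := by
      rw [← Matrix.l2_opNorm_conjTranspose_mul_self Xᵀ,
        Matrix.conjTranspose_eq_transpose_of_trivial, Matrix.transpose_transpose, hX]
      exact l2_norm_one_le d₁
    nlinarith [norm_nonneg Xᵀ]
  have hXn : ‖X‖ ≤ 1 := by
    have := Matrix.l2_opNorm_conjTranspose Xᵀ
    rw [Matrix.conjTranspose_eq_transpose_of_trivial, Matrix.transpose_transpose] at this
    rw [this]; exact hXt
  -- rewrite the sum
  have hM : (∑ i : Fin n₁, ∑ j : Fin n₂,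
        vecMulVec (fun a => X a i) (fun a => X a i) * W *
          vecMulVec (Pi.single j (1 : ℝ)) (Pi.single j (1 : ℝ)) * Wᵀ *
          vecMulVec (fun a => X a i) (fun a => X a i))
      = X * Matrix.diagonal c * Xᵀ := by
    rw [← sum_smul_outer]
    refine Finset.sum_congr rfl fun i _ => ?_
    have step : ∀ j : Fin n₂,
        vecMulVec (fun a => X a i) (fun a => X a i) * W *
          vecMulVec (Pi.single j (1:ℝ)) (Pi.single j (1:ℝ)) * Wᵀ *
          vecMulVec (fun a => X a i) (fun a => X a i)
        = (vecMulVec (fun a => X a i) (fun a => X a i) * W) *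
          (vecMulVec (Pi.single j (1:ℝ)) (Pi.single j (1:ℝ)) *
            (Wᵀ * vecMulVec (fun a => X a i) (fun a => X a i))) := fun j => by
      rw [Matrix.mul_assoc, Matrix.mul_assoc]
    simp_rw [step]
    rw [← Matrix.mul_sum, ← Matrix.sum_mul, sum_single_outer, Matrix.one_mul, ← Matrix.mul_assoc,
      Matrix.mul_assoc _ W Wᵀ, outer_mul_outer]
  rw [hM, norm_smul]
  have hnorm : ‖X * Matrix.diagonal c * Xᵀ‖ ≤ σ₁ ^ 2 * (mu ^ 2 * d₁ / n₁) := by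
    calc ‖X * Matrix.diagonal c * Xᵀ‖
        ≤ ‖X * Matrix.diagonal c‖ * ‖Xᵀ‖ := Matrix.l2_opNorm_mul _ _
      _ ≤ (‖X‖ * ‖Matrix.diagonal c‖) * ‖Xᵀ‖ := by
          exact mul_le_mul_of_nonneg_right (Matrix.l2_opNorm_mul _ _) (norm_nonneg _)
      _ ≤ (1 * (σ₁ ^ 2 * (mu ^ 2 * d₁ / n₁))) * 1 := by
          have hd := l2_opNorm_diagonal_le c _ (mul_nonneg (sq_nonneg _) hb0) hci
          exact mul_le_mul (mul_le_mul hXn hd (norm_nonneg _) zero_le_one) hXt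
            (norm_nonneg _) (by positivity)
      _ = σ₁ ^ 2 * (mu ^ 2 * d₁ / n₁) := by ring
  have hs : ‖((n₁ : ℝ) * n₂)⁻¹‖ = ((n₁ : ℝ) * n₂)⁻¹ := by
    rw [Real.norm_eq_abs, abs_of_nonneg]; positivity
  rw [hs]
  calc ((n₁ : ℝ) * n₂)⁻¹ * ‖X * Matrix.diagonal c * Xᵀ‖
      ≤ ((n₁ : ℝ) * n₂)⁻¹ * (σ₁ ^ 2 * (mu ^ 2 * d₁ / n₁)) := by
        exact mul_le_mul_of_nonneg_left hnorm (by positivity)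
    _ = σ₁ ^ 2 * mu ^ 2 * d₁ / ((n₁ : ℝ) ^ 2 * n₂) := by
        field_simp
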